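/- arXiv:1103.5254 — 5 statements merged into one kernel-verified Lean document; each statement's English description precedes it below -/
import Mathlib

section
/- Fix a finite nonempty index set Φ, a nonempty finite outcome set A, a natural number K, and for every f ∈ Φ a matrix R^f ∈ ℝ^{A×K} (with row r^f(a) ∈ ℝ^K for each outcome a ∈ A). Let σ̂ and σ̃ be probability distributions on A. Then the following are equivalent: (i) for every w ∈ ℝ^K, max_{f∈Φ} Σ_{a∈A} σ̂_a (r^f(a)·w) ≤ max_{g∈Φ} Σ_{a∈A} σ̃_a (r^g(a)·w); (ii) for every f ∈ Φ there exists a probability vector η^f ∈ Δ(Φ) such that the vector Σ_{a∈A} σ̂_a r^f(a) ∈ ℝ^K equals Σ_{g∈Φ} η^f_g · (Σ_{a∈A} σ̃_a r^g(a)). -/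
/-!
Both sides of (i) are maxima of linear functionals of `w`: writing `x f = ∑ a, σh a • R f a` and
`y g = ∑ a, σt a • R g a`, condition (i) says that for every `f` and `w` the value `w ⬝ᵥ x f` is
at most `max_g w ⬝ᵥ y g`. By Hahn–Banach separation (every functional on `ℝ^K` is a dot product)
this holds iff `x f` lies in the convex hull of the finitely many points `y g`, and the points of
that hull are exactly the combinations `∑ g, η g • y g` with `η ∈ Δ(Φ)`.
-/

open Finset Matrix

open Set in
theorem mem_convexHull_range_iff_exists_stdSimplex {R E ι : Type*} [Field R] [LinearOrder R]
    [IsStrictOrderedRing R] [AddCommGroup E] [Module R E] [Fintype ι] (y : ι → E) (x : E) :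
    x ∈ convexHull R (range y) ↔ ∃ η ∈ stdSimplex R ι, ∑ i, η i • y i = x := by
  classical
  have hrange : range y = Fintype.linearCombination R y '' range fun i ↦ Pi.single i 1 := by
    rw [← range_comp]
    simp [Function.comp_def]
  rw [hrange, ← LinearMap.image_convexHull, convexHull_rangle_single_eq_stdSimplex]
  rfl

open Set in
theorem mem_convexHull_range_iff_forall_le_sup' {E ι : Type*} [AddCommGroup E] [Module ℝ E]
    [TopologicalSpace E] [IsTopologicalAddGroup E] [ContinuousSMul ℝ E] [LocallyConvexSpace ℝ E]
    [T2Space E] [Fintype ι] [Nonempty ι] (y : ι → E) (x : E) :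
    x ∈ convexHull ℝ (range y) ↔ ∀ F : StrongDual ℝ E, F x ≤ univ.sup' univ_nonempty (F ∘ y) := by
  constructor
  · intro hx F
    have hsub : convexHull ℝ (range y) ⊆ {z | F z ≤ univ.sup' univ_nonempty (F ∘ y)} :=
      convexHull_min (range_subset_iff.2 fun i ↦ le_sup' (F ∘ y) (mem_univ i))
        (convex_halfSpace_le F.isLinear _)
    exact hsub hx
  · intro h
    by_contra hx
    have hclosed : IsClosed (convexHull ℝ (range y)) :=
      ((finite_range y).isCompact_convexHull (𝕜 := ℝ)).isClosed
    obtain ⟨F, u, hFu, hux⟩ := geometric_hahn_banach_closed_point (convex_convexHull ℝ _) hclosed hx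
    have hsup : univ.sup' univ_nonempty (F ∘ y) < u :=
      (sup'_lt_iff _).2 fun i _ ↦ hFu _ (subset_convexHull ℝ _ (mem_range_self i))
    exact (h F).not_gt (hsup.trans hux)

theorem mem_convexHull_range_iff_forall_dotProduct_le {n ι : Type*} [Fintype n] [Fintype ι]
    [Nonempty ι] (y : ι → n → ℝ) (x : n → ℝ) :
    x ∈ convexHull ℝ (Set.range y) ↔ ∀ w, w ⬝ᵥ x ≤ univ.sup' univ_nonempty (fun i ↦ w ⬝ᵥ y i) := by
  classical
  rw [mem_convexHull_range_iff_forall_le_sup']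
  constructor
  · intro h w
    exact h (LinearMap.toContinuousLinearMap (dotProductEquiv ℝ n w))
  · intro h F
    have hF : ⇑F = dotProduct ((dotProductEquiv ℝ n).symm F.toLinearMap) :=
      congrArg DFunLike.coe ((dotProductEquiv ℝ n).apply_symm_apply F.toLinearMap).symm
    rw [hF]
    exact h _

theorem forall_sup'_dotProduct_le_iff_forall_mem_convexHull {n ι κ : Type*} [Fintype n]
    [Fintype ι] [Nonempty ι] [Fintype κ] [Nonempty κ] (x : κ → n → ℝ) (y : ι → n → ℝ) :
    (∀ w, univ.sup' univ_nonempty (fun j ↦ w ⬝ᵥ x j) ≤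
        univ.sup' univ_nonempty (fun i ↦ w ⬝ᵥ y i)) ↔
      ∀ j, x j ∈ convexHull ℝ (Set.range y) := by
  simp only [sup'_le_iff, mem_univ, true_implies, mem_convexHull_range_iff_forall_dotProduct_le]
  exact forall_comm

theorem strong_rationality_iff_ICE_general
    {Φ A : Type*} [Fintype Φ] [Nonempty Φ] [Fintype A]
    {K : ℕ} (R : Φ → A → Fin K → ℝ)
    (σh σt : A → ℝ) :
    (∀ w : Fin K → ℝ,
        univ.sup' univ_nonempty
            (fun f : Φ => ∑ a, σh a * ∑ k, R f a k * w k) ≤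
        univ.sup' univ_nonempty
            (fun g : Φ => ∑ a, σt a * ∑ k, R g a k * w k)) ↔
    (∀ f : Φ, ∃ η : Φ → ℝ, η ∈ stdSimplex ℝ Φ ∧
        ∀ k : Fin K, ∑ a, σh a * R f a k = ∑ g, η g * ∑ a, σt a * R g a k) := by
  have hregret (σ : A → ℝ) (f : Φ) (w : Fin K → ℝ) :
      ∑ a, σ a * ∑ k, R f a k * w k = w ⬝ᵥ ∑ a, σ a • R f a := by
    rw [dotProduct_sum]
    refine sum_congr rfl fun a _ ↦ ?_
    rw [dotProduct_smul, dotProduct_comm, smul_eq_mul]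
    rfl
  simp only [hregret, forall_sup'_dotProduct_le_iff_forall_mem_convexHull,
    mem_convexHull_range_iff_exists_stdSimplex, funext_iff, Finset.sum_apply, Pi.smul_apply,
    smul_eq_mul, eq_comm]

/-- **Theorem 1 (ICE polytope characterization).**
A distribution `σh` satisfies strong rationality with respect to `σt`
(i.e. for every utility weight vector `w`, the maximal expected regret of `σh`
is at most that of `σt`) if and only if `σh` lies in the Inverse Correlated
Equilibria (ICE) polytope determined by `σt`. -/
theorem strong_rationality_iff_ICE
    {Φ A : Type*} [Fintype Φ] [Nonempty Φ] [Fintype A] [Nonempty A]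
    {K : ℕ} (R : Φ → A → Fin K → ℝ)
    (σh σt : A → ℝ) (hσh : σh ∈ stdSimplex ℝ A) (hσt : σt ∈ stdSimplex ℝ A) :
    (∀ w : Fin K → ℝ,
        univ.sup' univ_nonempty
            (fun f : Φ => ∑ a, σh a * ∑ k, R f a k * w k) ≤
        univ.sup' univ_nonempty
            (fun g : Φ => ∑ a, σt a * ∑ k, R g a k * w k)) ↔
    (∀ f : Φ, ∃ η : Φ → ℝ, η ∈ stdSimplex ℝ Φ ∧
        ∀ k : Fin K, ∑ a, σh a * R f a k = ∑ g, η g * ∑ a, σt a * R g a k) :=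
  strong_rationality_iff_ICE_general R σh σt
end

section
/- Let A be a nonempty finite index set, let a_i ∈ ℝ^K for each i ∈ A, and let b ∈ ℝ^K. Then b·w ≤ max_{i∈A} (a_i·w) holds for every w ∈ ℝ^K if and only if there exists a probability vector λ ∈ Δ(A) such that b = Σ_{i∈A} λ_i a_i, i.e. b lies in the convex hull of {a_i : i ∈ A}. -/
/-!
A linear functional attains its maximum over the convex hull of finitely many points at one of
the points, which gives one implication. Conversely, if `b` lies outside the (closed) convex hull
of the `a i`, Hahn–Banach separation yields a functional that is strictly larger at `b` than at
every `a i`; on `ℝ^K` every functional is `x ↦ ∑ k, x k * w k`, so this `w` violates the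
inequality.
-/

open Finset

theorem convexHull_range_eq_image_stdSimplex {𝕜 ι E : Type*} [Field 𝕜] [LinearOrder 𝕜]
    [IsStrictOrderedRing 𝕜] [Fintype ι] [AddCommGroup E] [Module 𝕜 E] (a : ι → E) :
    convexHull 𝕜 (Set.range a) = (fun l : ι → 𝕜 => ∑ i, l i • a i) '' stdSimplex 𝕜 ι := by
  classical
  change _ = Fintype.linearCombination 𝕜 a '' _
  rw [← convexHull_basis_eq_stdSimplex, LinearMap.image_convexHull, ← Set.range_comp]
  congr with i
  simp [Fintype.linearCombination_apply, ite_smul]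

section Separation

variable {ι E : Type*} [Fintype ι] [Nonempty ι] [TopologicalSpace E] [AddCommGroup E]
  [Module ℝ E] [IsTopologicalAddGroup E] [ContinuousSMul ℝ E] [LocallyConvexSpace ℝ E]
  [T2Space E]

theorem mem_convexHull_range_iff_forall_le_sup'_s2 (a : ι → E) (b : E) :
    b ∈ convexHull ℝ (Set.range a) ↔
      ∀ f : StrongDual ℝ E, f b ≤ univ.sup' univ_nonempty fun i => f (a i) := by
  constructor
  · intro hb f
    obtain ⟨_, ⟨i, rfl⟩, hi⟩ :=
      ((f : E →ₗ[ℝ] ℝ).convexOn convex_univ).exists_ge_of_mem_convexHull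
        (Set.subset_univ _) hb
    exact hi.trans (le_sup' (fun i => f (a i)) (mem_univ i))
  · intro h
    by_contra hb
    obtain ⟨f, u, hfu, hub⟩ := geometric_hahn_banach_closed_point (convex_convexHull ℝ _)
      ((Set.finite_range a).isClosed_convexHull ℝ) hb
    have hsup : univ.sup' univ_nonempty (fun i => f (a i)) < f b :=
      (sup'_lt_iff _).2 fun i _ =>
        (hfu _ (subset_convexHull ℝ _ (Set.mem_range_self i))).trans hub
    exact (h f).not_gt hsup

end Separation

theorem LinearMap.exists_apply_eq_sum_mul {ι : Type*} [Fintype ι] (f : (ι → ℝ) →ₗ[ℝ] ℝ) :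
    ∃ w : ι → ℝ, ∀ x, f x = ∑ k, x k * w k := by
  classical
  exact ⟨fun k => f fun j => if k = j then 1 else 0, fun x => by
    simpa using f.pi_apply_eq_sum_univ x⟩

theorem forall_strongDual_iff_forall_sum_mul {ι : Type*} [Fintype ι]
    (P : ((ι → ℝ) → ℝ) → Prop) :
    (∀ f : StrongDual ℝ (ι → ℝ), P f) ↔ ∀ w : ι → ℝ, P fun x => ∑ k, x k * w k := by
  constructor
  · intro h w
    convert h (∑ k, w k • ContinuousLinearMap.proj k) using 1
    ext x
    simp [mul_comm]
  · intro h f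
    obtain ⟨w, hw⟩ := LinearMap.exists_apply_eq_sum_mul (f : (ι → ℝ) →ₗ[ℝ] ℝ)
    convert h w using 1
    exact funext hw

/-- **Technical Lemma 2 (support-function characterization of the convex hull).**
`b·w ≤ max_{i∈A} (a_i·w)` holds for every weight vector `w ∈ ℝ^K` if and only if
`b` is a convex combination `Σ_i l_i a_i` of the points `a_i` for some probability
vector `l ∈ Δ(A)`. -/
theorem forall_dot_le_max_iff_convex_combination
    {A : Type*} [Fintype A] [Nonempty A] {K : ℕ}
    (a : A → Fin K → ℝ) (b : Fin K → ℝ) :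
    (∀ w : Fin K → ℝ,
        (∑ k, b k * w k) ≤ univ.sup' univ_nonempty (fun i : A => ∑ k, a i k * w k)) ↔
    ∃ l : A → ℝ, l ∈ stdSimplex ℝ A ∧ b = fun k => ∑ i, l i * a i k := by
  rw [← forall_strongDual_iff_forall_sum_mul
      (fun f => f b ≤ univ.sup' univ_nonempty fun i => f (a i)),
    ← mem_convexHull_range_iff_forall_le_sup'_s2, convexHull_range_eq_image_stdSimplex]
  refine exists_congr fun l => and_congr_right fun _ => ?_
  rw [eq_comm, funext_iff, funext_iff]
  simp [Finset.sum_apply]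
end

section
/- Fix a finite nonempty index set Φ, a nonempty finite outcome set A, a natural number K, for every f ∈ Φ a matrix R^f ∈ ℝ^{A×K} with rows r^f(a), probability distributions σ̂, σ̃ on A, and ν ≥ 0. Suppose the ICE constraints hold up to slack ν in the sup norm: for every f ∈ Φ there exists η^f ∈ Δ(Φ) such that every coordinate k ∈ {1,…,K} satisfies |(Σ_{a∈A} σ̂_a r^f(a))_k − (Σ_{g∈Φ} η^f_g Σ_{a∈A} σ̃_a r^g(a))_k| ≤ ν. Then for every w ∈ ℝ^K, Regret^Φ(σ̂,w) ≤ Regret^Φ(σ̃,w) + ν‖w‖₁, where ‖w‖₁ = Σ_{k=1}^K |w_k|. -/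
/-!
The regret of `f` under `σh` against `w` is the pairing of the regret vector `σh ᵥ* R f` with `w`.
By the slack condition this vector is coordinatewise `ν`-close to the `η`-mixture of the regret
vectors `σt ᵥ* R g`, so the pairings differ by at most `ν‖w‖₁`; and the pairing of the mixture is
a convex combination of `σt`-regrets, hence at most their maximum.
-/

open Finset Matrix

section

variable {ι : Type*} [Fintype ι]

theorem dotProduct_le_add_of_abs_sub_le {x y w : ι → ℝ} {ν : ℝ} (h : ∀ k, |x k - y k| ≤ ν) :
    x ⬝ᵥ w ≤ y ⬝ᵥ w + ν * ∑ k, |w k| := by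
  have hdiff : (x - y) ⬝ᵥ w ≤ ∑ k, ν * |w k| :=
    sum_le_sum fun k _ =>
      calc (x k - y k) * w k ≤ |x k - y k| * |w k| := abs_mul (x k - y k) (w k) ▸ le_abs_self _
        _ ≤ ν * |w k| := mul_le_mul_of_nonneg_right (h k) (abs_nonneg _)
  rw [sub_dotProduct, ← mul_sum] at hdiff
  linarith

theorem sum_mul_le_sup'_of_mem_stdSimplex [Nonempty ι] {η F : ι → ℝ}
    (hη : η ∈ stdSimplex ℝ ι) : ∑ i, η i * F i ≤ univ.sup' univ_nonempty F := by
  have h := centerMass_le_sup (s := univ) (f := F) (fun i _ => hη.1 i) (by rw [hη.2]; exact one_pos)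
  simpa [centerMass, hη.2] using h

end

theorem regret_le_of_slack_ICE_general
    {Φ A : Type*} [Fintype Φ] [Nonempty Φ] [Fintype A]
    {K : ℕ} (R : Φ → A → Fin K → ℝ)
    (σh σt : A → ℝ)
    (ν : ℝ)
    (hslack : ∀ f : Φ, ∃ η : Φ → ℝ, η ∈ stdSimplex ℝ Φ ∧
      ∀ k : Fin K,
        |(∑ a, σh a * R f a k) - ∑ g, η g * ∑ a, σt a * R g a k| ≤ ν) :
    ∀ w : Fin K → ℝ,
      univ.sup' univ_nonempty
          (fun f : Φ => ∑ a, σh a * ∑ k, R f a k * w k) ≤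
      univ.sup' univ_nonempty
          (fun f : Φ => ∑ a, σt a * ∑ k, R f a k * w k) + ν * ∑ k, |w k| := by
  intro w
  refine sup'_le _ _ fun f _ => ?_
  obtain ⟨η, hη, hclose⟩ := hslack f
  let mixture : Fin K → ℝ := ∑ g, η g • σt ᵥ* R g
  calc ∑ a, σh a * ∑ k, R f a k * w k = σh ᵥ* R f ⬝ᵥ w := dotProduct_mulVec σh (R f) w
    _ ≤ mixture ⬝ᵥ w + ν * ∑ k, |w k| :=
        dotProduct_le_add_of_abs_sub_le fun k => by simpa [mixture, vecMul, dotProduct] using hclose k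
    _ = ∑ g, η g * ∑ a, σt a * ∑ k, R g a k * w k + ν * ∑ k, |w k| := by
        simp only [mixture, sum_dotProduct, smul_dotProduct, smul_eq_mul, ← dotProduct_mulVec σt (R _)]
        rfl
    _ ≤ _ := by grw [sum_mul_le_sup'_of_mem_stdSimplex hη]

/-- **Lemma 3 (slack bound on regret violation).**
If `σh` satisfies the ICE constraints with respect to `σt` up to slack `ν`
(coordinatewise, in absolute value), then for every utility weight vector `w`
the regret of `σh` exceeds that of `σt` by at most `ν‖w‖₁`. -/
theorem regret_le_of_slack_ICE
    {Φ A : Type*} [Fintype Φ] [Nonempty Φ] [Fintype A] [Nonempty A]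
    {K : ℕ} (R : Φ → A → Fin K → ℝ)
    (σh σt : A → ℝ) (hσh : σh ∈ stdSimplex ℝ A) (hσt : σt ∈ stdSimplex ℝ A)
    (ν : ℝ) (hν : 0 ≤ ν)
    (hslack : ∀ f : Φ, ∃ η : Φ → ℝ, η ∈ stdSimplex ℝ Φ ∧
      ∀ k : Fin K,
        |(∑ a, σh a * R f a k) - ∑ g, η g * ∑ a, σt a * R g a k| ≤ ν) :
    ∀ w : Fin K → ℝ,
      univ.sup' univ_nonempty
          (fun f : Φ => ∑ a, σh a * ∑ k, R f a k * w k) ≤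
      univ.sup' univ_nonempty
          (fun f : Φ => ∑ a, σt a * ∑ k, R f a k * w k) + ν * ∑ k, |w k| :=
  regret_le_of_slack_ICE_general R σh σt ν hslack
end

section
/- Let A be a nonempty finite set and let S ⊆ Δ(A) be a nonempty closed convex set of probability distributions on A. Let σ* ∈ S maximize the Shannon entropy H over S. Then σ* minimizes the worst-case log-loss over all predictive distributions: for every σ̂ ∈ Δ(A), sup_{σ∈S} ( −Σ_{a∈A} σ_a log σ̂_a ) ≥ sup_{σ∈S} ( −Σ_{a∈A} σ_a log σ*_a ) = H(σ*). (Here −Σ_a σ_a log σ̂_a is interpreted as +∞ if σ_a > 0 and σ̂_a = 0 for some a, and 0·log 0 = 0.) -/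
open Finset

/-- Shannon entropy of a distribution on a finite set, with the convention
`0 · log 0 = 0` (note `Real.log 0 = 0` in Mathlib). -/
noncomputable def shannonEntropy {A : Type*} [Fintype A] (σ : A → ℝ) : ℝ :=
  -∑ a, σ a * Real.log (σ a)

/-- Log-loss of the predictive distribution `σh` against the true distribution `σ`,
valued in the extended reals: it is `+∞` if some outcome has positive true
probability but zero predicted probability, and otherwise `−Σ_a σ_a log σh_a`
(with `0 · log 0 = 0`). -/
noncomputable def logLoss {A : Type*} [Fintype A] (σ σh : A → ℝ) : EReal :=
  if ∃ a, 0 < σ a ∧ σh a = 0 then ⊤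
  else ((-∑ a, σ a * Real.log (σh a) : ℝ) : EReal)

/-!
Mixing the entropy maximiser `x` with any `y ∈ S` gives `z = (1 - t) x + t y ∈ S`, and
`H(z) = (1 - t) CE(x, z) + t CE(y, z)` exactly. Gibbs' inequality `H(x) ≤ CE(x, z)`
together with `H(z) ≤ H(x)` then yields `CE(y, z) ≤ H(x)` for every `t ∈ (0, 1)`.
Letting `t → 0` shows first that `y` charges no outcome that `x` misses (otherwise
`CE(y, z) ≥ -y_a log t → ∞`), and then that `CE(y, x) ≤ H(x)`. So the worst-case log-loss
of `x` over `S` is `H(x)`, attained at `y = x`, while by Gibbs' inequality any other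
forecast suffers at least `H(x)` already against `x`.
-/

open Filter Topology

section

variable {A : Type*} [Fintype A]

noncomputable def crossEntropy (p q : A → ℝ) : ℝ :=
  -∑ a, p a * Real.log (q a)

lemma crossEntropy_self (p : A → ℝ) : crossEntropy p p = shannonEntropy p := rfl

lemma crossEntropy_smul_add_smul (r s : ℝ) (p p' q : A → ℝ) :
    crossEntropy (r • p + s • p') q = r * crossEntropy p q + s * crossEntropy p' q := by
  simp only [crossEntropy, Pi.add_apply, Pi.smul_apply, smul_eq_mul, add_mul,
    sum_add_distrib, mul_assoc, ← mul_sum]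
  ring

lemma mul_log_sub_mul_log_le {p q : ℝ} (hp : 0 ≤ p) (hq : 0 ≤ q) (hpq : 0 < p → 0 < q) :
    p * Real.log q - p * Real.log p ≤ q - p := by
  rcases hp.eq_or_lt with rfl | hp
  · simpa using hq
  have hlog := Real.log_le_sub_one_of_pos (div_pos (hpq hp) hp)
  rw [Real.log_div (hpq hp).ne' hp.ne'] at hlog
  calc p * Real.log q - p * Real.log p = p * (Real.log q - Real.log p) := by ring
    _ ≤ p * (q / p - 1) := mul_le_mul_of_nonneg_left hlog hp.le
    _ = q - p := by field_simp

lemma shannonEntropy_le_crossEntropy {p q : A → ℝ} (hp : ∀ a, 0 ≤ p a)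
    (hq : ∀ a, 0 ≤ q a) (hsum : ∑ a, q a ≤ ∑ a, p a) (hpq : ∀ a, 0 < p a → 0 < q a) :
    shannonEntropy p ≤ crossEntropy p q := by
  have hterm := sum_le_sum fun a (_ : a ∈ univ) => mul_log_sub_mul_log_le (hp a) (hq a) (hpq a)
  rw [sum_sub_distrib, sum_sub_distrib] at hterm
  simp only [shannonEntropy, crossEntropy]
  linarith

lemma neg_mul_log_le_crossEntropy {p q : A → ℝ} (hp : ∀ a, 0 ≤ p a)
    (hq : q ∈ stdSimplex ℝ A) (a : A) : -(p a * Real.log (q a)) ≤ crossEntropy p q := by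
  rw [crossEntropy, ← sum_neg_distrib]
  refine single_le_sum (f := fun b => -(p b * Real.log (q b))) (fun b _ => ?_) (mem_univ a)
  exact neg_nonneg.2 <| mul_nonpos_of_nonneg_of_nonpos (hp b)
    (Real.log_nonpos (hq.1 b) (stdSimplex.le_one ⟨q, hq⟩ b))

lemma continuousAt_crossEntropy {p q : A → ℝ} (hpq : ∀ a, q a = 0 → p a = 0) :
    ContinuousAt (crossEntropy p) q := by
  refine (tendsto_finsetSum univ fun a _ => ?_).neg
  by_cases hqa : q a = 0
  · simp only [hpq a hqa, zero_mul]
    exact tendsto_const_nhds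
  · exact continuousAt_const.mul ((continuous_apply a).continuousAt.log hqa)

lemma crossEntropy_mix_le_shannonEntropy {x y : A → ℝ} (hx : x ∈ stdSimplex ℝ A)
    (hy : y ∈ stdSimplex ℝ A) {t : ℝ} (ht0 : 0 < t) (ht1 : t < 1)
    (hmix : shannonEntropy ((1 - t) • x + t • y) ≤ shannonEntropy x) :
    crossEntropy y ((1 - t) • x + t • y) ≤ shannonEntropy x := by
  set z := (1 - t) • x + t • y with hz_def
  have hz : z ∈ stdSimplex ℝ A := convex_stdSimplex ℝ A hx hy (by linarith) ht0.le (by ring)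
  have hgibbs : shannonEntropy x ≤ crossEntropy x z := by
    refine shannonEntropy_le_crossEntropy hx.1 hz.1 (by rw [hz.2, hx.2]) fun a hxa => ?_
    have := mul_pos (sub_pos.2 ht1) hxa
    simp only [z, Pi.add_apply, Pi.smul_apply, smul_eq_mul]
    nlinarith [hy.1 a]
  have hsplit : shannonEntropy z = (1 - t) * crossEntropy x z + t * crossEntropy y z := by
    rw [← crossEntropy_self, hz_def, crossEntropy_smul_add_smul]
  have : t * crossEntropy y z ≤ t * shannonEntropy x := by nlinarith
  exact le_of_mul_le_mul_left this ht0

lemma eq_zero_of_isMaxOn_shannonEntropy {S : Set (A → ℝ)} (hS : S ⊆ stdSimplex ℝ A)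
    (hconv : Convex ℝ S) {x y : A → ℝ} (hx : x ∈ S) (hmax : IsMaxOn shannonEntropy S x)
    (hy : y ∈ S) {a : A} (hxa : x a = 0) : y a = 0 := by
  by_contra hya
  have hya : 0 < y a := lt_of_le_of_ne ((hS hy).1 a) (Ne.symm hya)
  obtain ⟨t, ⟨ht0, ht1⟩, hlogt⟩ : ∃ t ∈ Set.Ioo (0 : ℝ) 1,
      Real.log t < -shannonEntropy x / y a :=
    (Eventually.and (Ioo_mem_nhdsGT one_pos)
      (Real.tendsto_log_nhdsGT_zero.eventually (eventually_lt_atBot _))).exists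
  set z := (1 - t) • x + t • y
  have hz : z ∈ S := hconv hx hy (by linarith) ht0.le (by ring)
  have hza : z a = t * y a := by simp [z, hxa]
  have hlogz : Real.log (z a) ≤ Real.log t := by
    rw [hza]
    exact Real.log_le_log (by positivity)
      (mul_le_of_le_one_right ht0.le (stdSimplex.le_one ⟨y, hS hy⟩ a))
  have hCE : -(y a * Real.log (z a)) ≤ shannonEntropy x :=
    (neg_mul_log_le_crossEntropy (hS hy).1 (hS hz) a).trans
      (crossEntropy_mix_le_shannonEntropy (hS hx) (hS hy) ht0 ht1 (hmax hz))
  rw [lt_div_iff₀ hya] at hlogt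
  nlinarith

lemma crossEntropy_le_of_isMaxOn_shannonEntropy {S : Set (A → ℝ)} (hS : S ⊆ stdSimplex ℝ A)
    (hconv : Convex ℝ S) {x y : A → ℝ} (hx : x ∈ S) (hmax : IsMaxOn shannonEntropy S x)
    (hy : y ∈ S) : crossEntropy y x ≤ shannonEntropy x := by
  have hcont : ContinuousAt (fun t : ℝ => crossEntropy y ((1 - t) • x + t • y)) 0 :=
    (continuousAt_crossEntropy fun a hxa =>
      eq_zero_of_isMaxOn_shannonEntropy hS hconv hx hmax hy hxa).comp_of_eq
      (by fun_prop) (by simp)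
  have hlim : Tendsto (fun t : ℝ => crossEntropy y ((1 - t) • x + t • y)) (𝓝[>] 0)
      (𝓝 (crossEntropy y x)) := by
    simpa using hcont.tendsto.mono_left nhdsWithin_le_nhds
  refine le_of_tendsto hlim ?_
  filter_upwards [Ioo_mem_nhdsGT one_pos] with t ht
  exact crossEntropy_mix_le_shannonEntropy (hS hx) (hS hy) ht.1 ht.2
    (hmax (hconv hx hy (by linarith [ht.2]) ht.1.le (by ring)))

lemma logLoss_of_forall_ne_zero {σ σh : A → ℝ} (h : ∀ a, 0 < σ a → σh a ≠ 0) :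
    logLoss σ σh = crossEntropy σ σh :=
  if_neg fun ⟨a, ha, ha'⟩ => h a ha ha'

lemma logLoss_self (σ : A → ℝ) : logLoss σ σ = shannonEntropy σ :=
  logLoss_of_forall_ne_zero fun _ ha => ha.ne'

lemma shannonEntropy_le_logLoss {σ σh : A → ℝ} (hσ : σ ∈ stdSimplex ℝ A)
    (hσh : σh ∈ stdSimplex ℝ A) : (shannonEntropy σ : EReal) ≤ logLoss σ σh := by
  by_cases h : ∀ a, 0 < σ a → σh a ≠ 0
  · rw [logLoss_of_forall_ne_zero h, EReal.coe_le_coe_iff]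
    exact shannonEntropy_le_crossEntropy hσ.1 hσh.1 (by rw [hσ.2, hσh.2])
      fun a ha => lt_of_le_of_ne (hσh.1 a) (h a ha).symm
  · push Not at h
    rw [logLoss, if_pos h]
    exact le_top

end

theorem maxent_minimizes_worst_case_log_loss_general
    {A : Type*} [Fintype A]
    (S : Set (A → ℝ)) (hS : S ⊆ stdSimplex ℝ A)
    (hconv : Convex ℝ S)
    (σs : A → ℝ) (hσs : σs ∈ S)
    (hmax : ∀ σ ∈ S, shannonEntropy σ ≤ shannonEntropy σs) :
    (∀ σh ∈ stdSimplex ℝ A,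
        (⨆ σ ∈ S, logLoss σ σs) ≤ ⨆ σ ∈ S, logLoss σ σh) ∧
      (⨆ σ ∈ S, logLoss σ σs) = ((shannonEntropy σs : ℝ) : EReal) := by
  have hworst : (⨆ σ ∈ S, logLoss σ σs) = ((shannonEntropy σs : ℝ) : EReal) := by
    refine le_antisymm (iSup₂_le fun σ hσ => ?_) ?_
    · have hsupp : ∀ a, 0 < σ a → σs a ≠ 0 := fun a ha hσsa =>
        ha.ne' (eq_zero_of_isMaxOn_shannonEntropy hS hconv hσs hmax hσ hσsa)
      rw [logLoss_of_forall_ne_zero hsupp, EReal.coe_le_coe_iff]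
      exact crossEntropy_le_of_isMaxOn_shannonEntropy hS hconv hσs hmax hσ
    · exact logLoss_self σs ▸ le_iSup₂ (f := fun σ _ => logLoss σ σs) σs hσs
  refine ⟨fun σh hσh => ?_, hworst⟩
  rw [hworst]
  exact le_iSup₂_of_le σs hσs (shannonEntropy_le_logLoss (hS hσs) hσh)

/-- **Lemma 2 (Grünwald–Dawid, finite case).**
Let `S` be a nonempty closed convex set of distributions on a finite set `A`, and
let `σs ∈ S` maximize the Shannon entropy over `S`. Then `σs` minimizes the
worst-case log-loss over all predictive distributions: for every `σh ∈ Δ(A)`,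
the adversarial log-loss of `σh` over `S` is at least that of `σs`, and the
latter equals `H(σs)`. -/
theorem maxent_minimizes_worst_case_log_loss
    {A : Type*} [Fintype A] [Nonempty A]
    (S : Set (A → ℝ)) (hS : S ⊆ stdSimplex ℝ A) (hne : S.Nonempty)
    (hclosed : IsClosed S) (hconv : Convex ℝ S)
    (σs : A → ℝ) (hσs : σs ∈ S)
    (hmax : ∀ σ ∈ S, shannonEntropy σ ≤ shannonEntropy σs) :
    (∀ σh ∈ stdSimplex ℝ A,
        (⨆ σ ∈ S, logLoss σ σs) ≤ ⨆ σ ∈ S, logLoss σ σh) ∧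
      (⨆ σ ∈ S, logLoss σ σs) = ((shannonEntropy σs : ℝ) : EReal) :=
  maxent_minimizes_worst_case_log_loss_general S hS hconv σs hσs hmax
end

section
/- Fix a finite nonempty index set Φ, a nonempty finite outcome set A, a natural number K ≥ 1, for every f ∈ Φ a matrix R^f ∈ ℝ^{A×K} with rows r^f(a), and Δ > 0 such that |r^f(a)_k| ≤ Δ for all f, a, k. Let ε > 0 and δ ∈ (0,1). Let a_1,…,a_M be i.i.d. samples from σ ∈ Δ(A) with M ≥ (2/ε²)·log(2|Φ|K/δ), and let σ̃ be their empirical distribution. Then with probability at least 1−δ, for every w ∈ ℝ^K, Regret^Φ(σ̃,w) ≤ Regret^Φ(σ,w) + εΔ‖w‖₁. -/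
/-!
For each `f ∈ Φ` and coordinate `k`, the `k`-th entry of `σ̃ᵀ R^f` is the average of `M` i.i.d.
samples bounded by `Δ` with mean `(σᵀ R^f)_k`, so by Hoeffding it deviates from that mean by more
than `εΔ` with probability at most `2 exp (-M ε² / 2)`; the choice of `M` makes the union bound
over the `|Φ| K` pairs at most `δ`. Off this bad event, Hölder's inequality gives
`σ̃ᵀ R^f w ≤ σᵀ R^f w + εΔ ‖w‖₁` for every `f` and `w` at once, and one takes maxima over `f`.
-/

open Finset MeasureTheory ProbabilityTheory Matrix Real

section Hoeffding

variable {α ι : Type*} [MeasurableSpace α] [Fintype ι] (μ : Measure α) [IsProbabilityMeasure μ]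
  {g : α → ℝ} {Δ t : ℝ}

lemma measureReal_sum_sub_integral_ge_le (hg : Measurable g) (hgΔ : ∀ x, |g x| ≤ Δ)
    (ht : 0 ≤ t) :
    (Measure.pi fun _ : ι => μ).real {ω | t ≤ ∑ i, (g (ω i) - μ[g])} ≤
      exp (-t ^ 2 / (2 * Fintype.card ι * Δ ^ 2)) := by
  have h_indep : iIndepFun (fun i (ω : ι → α) => g (ω i) - μ[g]) (Measure.pi fun _ => μ) :=
    iIndepFun_pi fun _ => (hg.sub_const _).aemeasurable
  have h_subG (i : ι) : HasSubgaussianMGF (fun ω : ι → α => g (ω i) - μ[g])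
      ((‖Δ - -Δ‖₊ / 2) ^ 2) (Measure.pi fun _ => μ) := by
    have hgi : Measurable fun ω : ι → α => g (ω i) := hg.comp (measurable_pi_apply i)
    have := hasSubgaussianMGF_of_mem_Icc (μ := Measure.pi fun _ => μ) hgi.aemeasurable
      (ae_of_all _ fun ω => abs_le.mp (hgΔ (ω i)))
    rwa [integral_comp_eval (μ := fun _ => μ) hg.aestronglyMeasurable] at this
  have hparam : (((‖Δ - -Δ‖₊ / 2) ^ 2 : NNReal) : ℝ) = Δ ^ 2 := by
    simp only [NNReal.coe_pow, NNReal.coe_div, coe_nnnorm, Real.norm_eq_abs, sub_neg_eq_add]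
    rw [div_pow, sq_abs]
    norm_num
    ring
  calc _ ≤ _ := HasSubgaussianMGF.measure_sum_ge_le_of_iIndepFun h_indep (s := univ)
        (fun i _ => h_subG i) ht
    _ = _ := by
      rw [sum_const, card_univ, nsmul_eq_mul, NNReal.coe_mul, NNReal.coe_natCast, hparam]
      ring_nf

lemma measureReal_abs_sum_sub_integral_ge_le (hg : Measurable g) (hgΔ : ∀ x, |g x| ≤ Δ)
    (ht : 0 ≤ t) :
    (Measure.pi fun _ : ι => μ).real {ω | t ≤ |∑ i, (g (ω i) - μ[g])|} ≤
      2 * exp (-t ^ 2 / (2 * Fintype.card ι * Δ ^ 2)) := by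
  have hneg : ∀ ω : ι → α, -∑ i, (g (ω i) - μ[g]) = ∑ i, ((-g) (ω i) - μ[-g]) := by
    intro ω
    simp only [Pi.neg_apply, integral_neg, ← sum_neg_distrib, neg_sub, sub_neg_eq_add,
      neg_add_eq_sub]
  calc _ ≤ (Measure.pi fun _ : ι => μ).real ({ω | t ≤ ∑ i, (g (ω i) - μ[g])} ∪
          {ω | t ≤ ∑ i, ((-g) (ω i) - μ[-g])}) := by
        refine measureReal_mono fun ω (hω : t ≤ |_|) => ?_
        rcases le_abs'.mp hω with h | h
        · right; show t ≤ _; rw [← hneg]; linarith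
        · left; exact h
    _ ≤ _ := measureReal_union_le _ _
    _ ≤ _ := by
      rw [two_mul]
      gcongr
      · exact measureReal_sum_sub_integral_ge_le μ hg hgΔ ht
      · exact measureReal_sum_sub_integral_ge_le μ hg.neg (fun x => by simpa using hgΔ x) ht

end Hoeffding

lemma dotProduct_le_mul_sum_abs {κ : Type*} [Fintype κ] {v w : κ → ℝ} {θ : ℝ}
    (hv : ∀ k, |v k| ≤ θ) : v ⬝ᵥ w ≤ θ * ∑ k, |w k| := by
  rw [mul_sum]
  refine sum_le_sum fun k _ => ?_
  calc v k * w k ≤ |v k| * |w k| := by rw [← abs_mul]; exact le_abs_self _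
    _ ≤ θ * |w k| := by gcongr; exact hv k

section Regret

variable {Φ A κ : Type*} [Fintype Φ] [Nonempty Φ] [Fintype A] [Fintype κ]

noncomputable def regret (R : Φ → Matrix A κ ℝ) (σ : A → ℝ) (w : κ → ℝ) : ℝ :=
  univ.sup' univ_nonempty fun f => σ ⬝ᵥ (R f *ᵥ w)

lemma regret_le_regret_add (R : Φ → Matrix A κ ℝ) {σ τ : A → ℝ} {θ : ℝ}
    (h : ∀ f k, |(σ ᵥ* R f) k - (τ ᵥ* R f) k| ≤ θ) (w : κ → ℝ) :
    regret R σ w ≤ regret R τ w + θ * ∑ k, |w k| := by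
  refine sup'_le _ _ fun f _ => ?_
  calc σ ⬝ᵥ (R f *ᵥ w) = τ ⬝ᵥ (R f *ᵥ w) + (σ ᵥ* R f - τ ᵥ* R f) ⬝ᵥ w := by
        rw [sub_dotProduct, dotProduct_mulVec, dotProduct_mulVec]; ring
    _ ≤ regret R τ w + θ * ∑ k, |w k| :=
        add_le_add (le_sup' (fun f => τ ⬝ᵥ (R f *ᵥ w)) (mem_univ f))
          (dotProduct_le_mul_sum_abs (h f))

end Regret

noncomputable def empiricalDist {A : Type*} [DecidableEq A] {M : ℕ} (ω : Fin M → A) (a : A) : ℝ :=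
  (#{m | ω m = a} : ℝ) / M

lemma empiricalDist_vecMul {A κ : Type*} [Fintype A] [DecidableEq A] {M : ℕ} (ω : Fin M → A)
    (B : Matrix A κ ℝ) (k : κ) : (empiricalDist ω ᵥ* B) k = (∑ m, B (ω m) k) / M := by
  rw [← sum_fiberwise univ ω fun m => B (ω m) k, sum_div]
  refine sum_congr rfl fun a _ => ?_
  rw [sum_congr rfl fun m hm => by rw [(mem_filter.mp hm).2], sum_const, nsmul_eq_mul,
    empiricalDist]
  ring

lemma le_mul_sq_div_two_of_le {L M ε : ℝ} (hε : 0 < ε) (h : 2 / ε ^ 2 * L ≤ M) :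
    L ≤ M * ε ^ 2 / 2 := by
  calc L = ε ^ 2 / 2 * (2 / ε ^ 2 * L) := by field_simp
    _ ≤ ε ^ 2 / 2 * M := by gcongr
    _ = M * ε ^ 2 / 2 := by ring

lemma mul_exp_neg_le_of_log_div_le {c δ x : ℝ} (hc : 0 < c) (hδ : 0 < δ)
    (h : log (c / δ) ≤ x) : c * exp (-x) ≤ δ := by
  calc c * exp (-x) ≤ c * exp (-log (c / δ)) := by gcongr
    _ = δ := by rw [exp_neg, exp_log (by positivity)]; field_simp

lemma measureReal_exists_abs_empiricalDist_vecMul_sub_gt_le {Φ A κ : Type*} [Fintype Φ]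
    [Fintype A] [DecidableEq A] [Fintype κ] [MeasurableSpace A] [MeasurableSingletonClass A]
    (μ : Measure A) [IsProbabilityMeasure μ] (R : Φ → Matrix A κ ℝ) {Δ θ : ℝ}
    (hR : ∀ f a k, |R f a k| ≤ Δ) {M : ℕ} (hM : 0 < M) (hθ : 0 ≤ θ) :
    (Measure.pi fun _ : Fin M => μ).real
        {ω | ∃ f k, θ < |(empiricalDist ω ᵥ* R f) k - ((fun a => μ.real {a}) ᵥ* R f) k|} ≤
      Fintype.card Φ * Fintype.card κ * (2 * exp (-M * θ ^ 2 / (2 * Δ ^ 2))) := by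
  have hM' : (0 : ℝ) < M := Nat.cast_pos.mpr hM
  have hmean (f : Φ) (k : κ) : μ[fun a => R f a k] = ((fun a => μ.real {a}) ᵥ* R f) k := by
    simp [integral_fintype Integrable.of_finite, vecMul, dotProduct]
  have hsub : {ω : Fin M → A | ∃ f k,
      θ < |(empiricalDist ω ᵥ* R f) k - ((fun a => μ.real {a}) ᵥ* R f) k|} ⊆
      ⋃ p : Φ × κ, {ω | M * θ ≤ |∑ m, (R p.1 (ω m) p.2 - μ[fun a => R p.1 a p.2])|} := by
    rintro ω ⟨f, k, hfk⟩
    refine Set.mem_iUnion.mpr ⟨(f, k), ?_⟩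
    have hsum : ∑ m, (R f (ω m) k - μ[fun a => R f a k]) =
        M * ((empiricalDist ω ᵥ* R f) k - ((fun a => μ.real {a}) ᵥ* R f) k) := by
      rw [empiricalDist_vecMul, hmean, sum_sub_distrib, sum_const, card_univ, Fintype.card_fin,
        nsmul_eq_mul]
      field_simp
    show M * θ ≤ |_|
    rw [hsum, abs_mul, Nat.abs_cast]
    exact mul_le_mul_of_nonneg_left hfk.le hM'.le
  calc _ ≤ _ := measureReal_mono hsub
    _ ≤ _ := measureReal_iUnion_fintype_le _
    _ ≤ ∑ _p : Φ × κ, 2 * exp (-M * θ ^ 2 / (2 * Δ ^ 2)) := by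
      refine sum_le_sum fun p _ => ?_
      have := measureReal_abs_sum_sub_integral_ge_le (ι := Fin M) μ (Measurable.of_discrete)
        (fun a => hR p.1 a p.2) (by positivity : 0 ≤ (M : ℝ) * θ)
      refine this.trans_eq ?_
      rw [Fintype.card_fin]
      field_simp
    _ = _ := by
      rw [sum_const, card_univ, Fintype.card_prod, nsmul_eq_mul]
      push_cast
      ring

theorem empirical_regret_close_whp_general
    {Φ A : Type*} [Fintype Φ] [Nonempty Φ] [Fintype A] [DecidableEq A]
    [MeasurableSpace A] [MeasurableSingletonClass A]
    {K : ℕ} (hK : 1 ≤ K) (R : Φ → A → Fin K → ℝ)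
    (Δ : ℝ) (hΔ : 0 < Δ) (hbound : ∀ f a k, |R f a k| ≤ Δ)
    (μ : Measure A) [IsProbabilityMeasure μ]
    (ε δ : ℝ) (hε : 0 < ε) (hδ0 : 0 < δ) (hδ1 : δ < 1)
    (M : ℕ) (hM : (2 / ε ^ 2) * Real.log (2 * (Fintype.card Φ) * K / δ) ≤ M) :
    ENNReal.ofReal (1 - δ) ≤
      (Measure.pi fun _ : Fin M => μ)
        {ω : Fin M → A | ∀ w : Fin K → ℝ,
          univ.sup' univ_nonempty
              (fun f : Φ =>
                ∑ a, ((univ.filter fun m => ω m = a).card : ℝ) / M *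
                  ∑ k, R f a k * w k) ≤
            univ.sup' univ_nonempty
                (fun f : Φ => ∑ a, (μ {a}).toReal * ∑ k, R f a k * w k) +
              ε * Δ * ∑ k, |w k|} := by
  set σ : A → ℝ := fun a => μ.real {a}
  set P := Measure.pi fun _ : Fin M => μ
  have hcard : (1 : ℝ) ≤ 2 * Fintype.card Φ * K := by
    have : (1 : ℝ) ≤ K := by exact_mod_cast hK
    have : (1 : ℝ) ≤ Fintype.card Φ := by exact_mod_cast Fintype.card_pos
    nlinarith
  have hlog : log (2 * Fintype.card Φ * K / δ) ≤ M * ε ^ 2 / 2 := le_mul_sq_div_two_of_le hε hM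
  have hM0 : 0 < M := by
    have hlog_pos : 0 < log (2 * Fintype.card Φ * K / δ) :=
      log_pos ((one_lt_div hδ0).mpr (by linarith))
    exact_mod_cast (by positivity : (0 : ℝ) < 2 / ε ^ 2 * _).trans_le hM
  set G := {ω : Fin M → A | ∀ f k, |(empiricalDist ω ᵥ* R f) k - (σ ᵥ* R f) k| ≤ ε * Δ}
  have hGc : P.real Gᶜ ≤ δ := by
    have hGc_eq : Gᶜ = {ω | ∃ f k, ε * Δ < |(empiricalDist ω ᵥ* R f) k - (σ ᵥ* R f) k|} := by
      ext ω; simp [G]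
    calc P.real Gᶜ ≤ _ := hGc_eq ▸ measureReal_exists_abs_empiricalDist_vecMul_sub_gt_le μ R
          hbound hM0 (by positivity)
      _ = 2 * Fintype.card Φ * K * exp (-(M * ε ^ 2 / 2)) := by
          rw [Fintype.card_fin]; field_simp
      _ ≤ δ := mul_exp_neg_le_of_log_div_le (by linarith) hδ0 hlog
  have hG : 1 - δ ≤ P.real G := by
    rw [probReal_compl_eq_one_sub MeasurableSet.of_discrete] at hGc; linarith
  calc ENNReal.ofReal (1 - δ) ≤ P G := by
        rw [← ofReal_measureReal]; exact ENNReal.ofReal_le_ofReal hG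
    _ ≤ _ := measure_mono fun ω hω w => regret_le_regret_add R hω w

/-- **Theorem 2 (sample complexity for regret).**
Let `μ` be a probability distribution on the finite outcome set `A` (with point
masses `σ_a = μ {a}`), and let `ω : Fin M → A` be `M` i.i.d. samples from `μ`,
with `M ≥ (2/ε²)·log(2|Φ|K/δ)`, and let `σ̃` be the empirical distribution of
the samples. Then with probability at least `1 − δ`, for every utility weight
vector `w`, `Regret^Φ(σ̃,w) ≤ Regret^Φ(σ,w) + εΔ‖w‖₁`. -/
theorem empirical_regret_close_whp
    {Φ A : Type*} [Fintype Φ] [Nonempty Φ] [Fintype A] [Nonempty A] [DecidableEq A]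
    [MeasurableSpace A] [MeasurableSingletonClass A]
    {K : ℕ} (hK : 1 ≤ K) (R : Φ → A → Fin K → ℝ)
    (Δ : ℝ) (hΔ : 0 < Δ) (hbound : ∀ f a k, |R f a k| ≤ Δ)
    (μ : Measure A) [IsProbabilityMeasure μ]
    (ε δ : ℝ) (hε : 0 < ε) (hδ0 : 0 < δ) (hδ1 : δ < 1)
    (M : ℕ) (hM : (2 / ε ^ 2) * Real.log (2 * (Fintype.card Φ) * K / δ) ≤ M) :
    ENNReal.ofReal (1 - δ) ≤
      (Measure.pi fun _ : Fin M => μ)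
        {ω : Fin M → A | ∀ w : Fin K → ℝ,
          univ.sup' univ_nonempty
              (fun f : Φ =>
                ∑ a, ((univ.filter fun m => ω m = a).card : ℝ) / M *
                  ∑ k, R f a k * w k) ≤
            univ.sup' univ_nonempty
                (fun f : Φ => ∑ a, (μ {a}).toReal * ∑ k, R f a k * w k) +
              ε * Δ * ∑ k, |w k|} :=
  empirical_regret_close_whp_general hK R Δ hΔ hbound μ ε δ hε hδ0 hδ1 M hM
end
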